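/- For any tree T on n vertices, there exists an edge e incident to a centroid of T such that min θ_T({e}) (the smaller of the two component sizes upon removing e) is maximal among all edges of T. -/

import Mathlib

/-!
Let `c` be a centroid, of weight `w`. For an edge `e`, the side of `T − e` not containing `c` is
connected in `T − c`, so it has at most `w` vertices: `min θ_T({e}) ≤ w` for every edge. Conversely,
let `y` be the neighbour of `c` in a largest component of `T − c`. The `y`-side of `T − cy` is that
component, of size `w`, and the `c`-side has at least `w` vertices: every component of `T − y` lies
in the `c`-side or in the `y`-side minus `y`, so otherwise `y` would have weight less than `w`.
Hence `min θ_T({cy}) = w`.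
-/

open SimpleGraph

/-- The multiset of connected component sizes of a graph on a finite vertex type. -/
noncomputable def compSizes {V : Type*} [Fintype V] (G : SimpleGraph V) : Multiset ℕ :=
  haveI : Fintype G.ConnectedComponent := Fintype.ofFinite _
  (Finset.univ : Finset G.ConnectedComponent).val.map fun c => Nat.card c.supp

/-- θ_T(S): the multiset of component sizes of T with the edges in S deleted. -/
noncomputable def theta {V : Type*} [Fintype V] (T : SimpleGraph V) (S : Finset (Sym2 V)) :
    Multiset ℕ :=
  compSizes (T.deleteEdges ↑S)

/-- The weight of a vertex: the maximal size of a connected component of T − v. -/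
noncomputable def vertexWeight {V : Type*} [Fintype V] (G : SimpleGraph V) (v : V) : ℕ :=
  haveI : Fintype ((G.induce ({v}ᶜ : Set V)).ConnectedComponent) := Fintype.ofFinite _
  (Finset.univ : Finset ((G.induce ({v}ᶜ : Set V)).ConnectedComponent)).sup
    fun c => Nat.card c.supp

/-- A centroid is a vertex of minimum weight. -/
def IsCentroid {V : Type*} [Fintype V] (G : SimpleGraph V) (c : V) : Prop :=
  ∀ u : V, vertexWeight G c ≤ vertexWeight G u

namespace SimpleGraph

variable {V W : Type*} {G : SimpleGraph V} {G' : SimpleGraph W}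

namespace ConnectedComponent

lemma image_supp_subset_supp_map (φ : G →g G') (C : G.ConnectedComponent) :
    φ '' C.supp ⊆ (C.map φ).supp := by
  rintro _ ⟨v, hv, rfl⟩
  rw [mem_supp_iff] at hv ⊢
  rw [← hv, map_mk]

variable [Finite W]

lemma card_supp_le_card_supp_map (φ : G →g G') (hφ : Function.Injective φ)
    (C : G.ConnectedComponent) : Nat.card C.supp ≤ Nat.card (C.map φ).supp := by
  rw [Nat.card_coe_set_eq, Nat.card_coe_set_eq, ← Set.ncard_image_of_injective _ hφ]
  exact Set.ncard_le_ncard (C.image_supp_subset_supp_map φ)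

lemma card_supp_lt_card_supp_map (φ : G →g G') (hφ : Function.Injective φ)
    (C : G.ConnectedComponent) {w : W} (hw : w ∈ (C.map φ).supp) (hφw : w ∉ Set.range φ) :
    Nat.card C.supp < Nat.card (C.map φ).supp := by
  rw [Nat.card_coe_set_eq, Nat.card_coe_set_eq, ← Set.ncard_image_of_injective _ hφ]
  refine Set.ncard_lt_ncard ((C.image_supp_subset_supp_map φ).ssubset_of_ne ?_)
  rintro h
  exact hφw (Set.image_subset_range φ C.supp (h ▸ hw))

end ConnectedComponent

lemma Connected.card_le_card_supp_of_injective [Finite W] (hG : G.Connected) (φ : G →g G')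
    (hφ : Function.Injective φ) (v : V) :
    Nat.card V ≤ Nat.card (G'.connectedComponentMk (φ v)).supp :=
  Nat.card_le_card_of_injective
    (fun u ↦ ⟨φ u, ConnectedComponent.sound ((hG u v).map φ)⟩)
    fun _ _ h ↦ hφ (congrArg Subtype.val h)

lemma Preconnected.reachable_deleteEdges_or (hG : G.Preconnected) (x y z : V) :
    (G.deleteEdges {s(x, y)}).Reachable x z ∨ (G.deleteEdges {s(x, y)}).Reachable y z := by
  by_contra hz
  obtain ⟨p⟩ := hG x z
  obtain ⟨d, -, hd, hd'⟩ := p.exists_boundary_dart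
    {w | (G.deleteEdges {s(x, y)}).Reachable x w ∨ (G.deleteEdges {s(x, y)}).Reachable y w}
    (Or.inl .rfl) hz
  apply hd'
  by_cases he : s(d.fst, d.snd) = s(x, y)
  · rcases Sym2.mem_iff.mp (he ▸ Sym2.mem_mk_right d.fst d.snd) with h | h
    · exact Or.inl (h ▸ .rfl)
    · exact Or.inr (h ▸ .rfl)
  · have hadj : (G.deleteEdges {s(x, y)}).Adj d.fst d.snd := (deleteEdges_adj ..).mpr ⟨d.adj, he⟩
    exact hd.imp (·.trans hadj.reachable) (·.trans hadj.reachable)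

lemma Preconnected.connectedComponent_deleteEdges_eq_or (hG : G.Preconnected) (x y : V)
    (C : (G.deleteEdges {s(x, y)}).ConnectedComponent) :
    C = (G.deleteEdges {s(x, y)}).connectedComponentMk x ∨
      C = (G.deleteEdges {s(x, y)}).connectedComponentMk y := by
  induction C using ConnectedComponent.ind with | h z =>
  exact (hG.reachable_deleteEdges_or x y z).imp (fun h ↦ (ConnectedComponent.sound h).symm)
    (fun h ↦ (ConnectedComponent.sound h).symm)

def induceComplHom {v : V} {e : Sym2 V} (hv : v ∈ e) :
    G.induce ({v}ᶜ : Set V) →g G.deleteEdges {e} where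
  toFun := Subtype.val
  map_rel' {a b} h := (deleteEdges_adj ..).mpr ⟨h, fun hab ↦ by
    rcases Sym2.mem_iff.mp ((Set.mem_singleton_iff.mp hab).symm ▸ hv) with h | h
    exacts [a.2 h.symm, b.2 h.symm]⟩

lemma induceComplHom_injective {v : V} {e : Sym2 V} (hv : v ∈ e) :
    Function.Injective (induceComplHom (G := G) hv) :=
  Subtype.val_injective

lemma Preconnected.exists_adj_mem_supp (hG : G.Preconnected) {c : V}
    (D : (G.induce ({c}ᶜ : Set V)).ConnectedComponent) :
    ∃ y : ({c}ᶜ : Set V), G.Adj c y ∧ y ∈ D.supp := by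
  obtain ⟨p⟩ := hG D.out c
  obtain ⟨d, -, ⟨y, hyD, hy⟩, hd⟩ := p.exists_boundary_dart (Subtype.val '' D.supp)
    ⟨D.out, D.out_eq, rfl⟩ fun ⟨u, _, hu⟩ ↦ u.2 hu
  refine ⟨y, ?_, hyD⟩
  by_cases hc : d.snd = c
  · rw [hy, ← hc]
    exact d.adj.symm
  · have hadj : (G.induce ({c}ᶜ : Set V)).Adj y ⟨d.snd, hc⟩ := by
      simpa only [comap_adj, Function.Embedding.subtype_apply, hy] using d.adj
    exact absurd ⟨_, (D.mem_supp_congr_adj hadj).mp hyD, rfl⟩ hd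

end SimpleGraph

section

variable {V : Type*} [Fintype V] {G H : SimpleGraph V}

-- `vertexWeight` is built on the `Fintype.ofFinite` instance, not the one instance search finds.
lemma card_supp_le_vertexWeight {v : V} (D : (G.induce ({v}ᶜ : Set V)).ConnectedComponent) :
    Nat.card D.supp ≤ vertexWeight G v :=
  Finset.le_sup (s := @Finset.univ _ (Fintype.ofFinite _))
    (f := fun C : (G.induce ({v}ᶜ : Set V)).ConnectedComponent ↦ Nat.card C.supp)
    (@Finset.mem_univ _ (Fintype.ofFinite _) D)

lemma vertexWeight_le {v : V} {m : ℕ}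
    (h : ∀ D : (G.induce ({v}ᶜ : Set V)).ConnectedComponent, Nat.card D.supp ≤ m) :
    vertexWeight G v ≤ m :=
  Finset.sup_le fun D _ ↦ h D

lemma exists_card_supp_eq_vertexWeight [Nontrivial V] (G : SimpleGraph V) (v : V) :
    ∃ D : (G.induce ({v}ᶜ : Set V)).ConnectedComponent, Nat.card D.supp = vertexWeight G v := by
  obtain ⟨u, hu⟩ := exists_ne v
  have : Nonempty (G.induce ({v}ᶜ : Set V)).ConnectedComponent :=
    ⟨(G.induce _).connectedComponentMk ⟨u, hu⟩⟩
  obtain ⟨D, -, hD⟩ := Finset.exists_mem_eq_sup (@Finset.univ _ (Fintype.ofFinite _))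
    (@Finset.univ_nonempty _ (Fintype.ofFinite _) _)
    (fun C : (G.induce ({v}ᶜ : Set V)).ConnectedComponent ↦ Nat.card C.supp)
  exact ⟨D, hD.symm⟩

lemma card_supp_le_vertexWeight_of_notMem (hle : H ≤ G) {c : V} (C : H.ConnectedComponent)
    (hc : c ∉ C.supp) : Nat.card C.supp ≤ vertexWeight G c := by
  let ψ : C.toSimpleGraph →g G.induce ({c}ᶜ : Set V) :=
    { toFun := fun z ↦ ⟨z, fun h ↦ hc (h ▸ z.2)⟩
      map_rel' := fun h ↦ hle h }
  have hψ : Function.Injective ψ := fun _ _ h ↦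
    Subtype.ext (congrArg (fun z : ({c}ᶜ : Set V) ↦ z.1) h)
  exact (C.connected_toSimpleGraph.card_le_card_supp_of_injective ψ hψ ⟨C.out, C.out_eq⟩).trans
    (card_supp_le_vertexWeight _)

lemma vertexWeight_le_max (hG : G.Preconnected) (x y : V) :
    vertexWeight G y ≤ max (Nat.card ((G.deleteEdges {s(x, y)}).connectedComponentMk x).supp)
      (Nat.card ((G.deleteEdges {s(x, y)}).connectedComponentMk y).supp - 1) := by
  refine vertexWeight_le fun D ↦ ?_
  have hφ := induceComplHom_injective (G := G) (Sym2.mem_mk_right x y)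
  rcases hG.connectedComponent_deleteEdges_eq_or x y (D.map (induceComplHom _)) with h | h
  · exact le_max_of_le_left (h ▸ D.card_supp_le_card_supp_map _ hφ)
  · have := D.card_supp_lt_card_supp_map _ hφ (h ▸ rfl : y ∈ _) fun ⟨z, hz⟩ ↦ z.2 hz
    rw [h] at this
    omega

lemma sInf_theta_eq_min (hG : G.Preconnected) (x y : V) :
    sInf {m | m ∈ theta G {s(x, y)}} =
      min (Nat.card ((G.deleteEdges {s(x, y)}).connectedComponentMk x).supp)
        (Nat.card ((G.deleteEdges {s(x, y)}).connectedComponentMk y).supp) := by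
  rw [← csInf_pair]
  congr 1
  ext m
  simp only [theta, Finset.coe_singleton]
  simp only [compSizes, Multiset.mem_map, Finset.mem_val, Finset.mem_univ, true_and,
    Set.mem_ofPred_eq, Set.mem_insert_iff, Set.mem_singleton_iff]
  constructor
  · rintro ⟨C, rfl⟩
    rcases hG.connectedComponent_deleteEdges_eq_or x y C with rfl | rfl <;> simp
  · rintro (rfl | rfl) <;> exact ⟨_, rfl⟩

lemma sInf_theta_le_vertexWeight {T : SimpleGraph V} (hT : T.IsTree) {f : Sym2 V}
    (hf : f ∈ T.edgeSet) (c : V) : sInf {m | m ∈ theta T {f}} ≤ vertexWeight T c := by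
  induction f with | h x y =>
  rw [sInf_theta_eq_min hT.connected.preconnected]
  have hxy : ¬ (T.deleteEdges {s(x, y)}).Reachable x y :=
    isAcyclic_iff_forall_isBridge.mp hT.isAcyclic hf
  by_cases hx : c ∈ ((T.deleteEdges {s(x, y)}).connectedComponentMk x).supp
  · refine min_le_of_right_le (card_supp_le_vertexWeight_of_notMem (deleteEdges_le _) _ ?_)
    intro hy
    rw [ConnectedComponent.mem_supp_iff] at hx hy
    exact hxy (ConnectedComponent.exact (hx.symm.trans hy))
  · exact min_le_of_left_le (card_supp_le_vertexWeight_of_notMem (deleteEdges_le _) _ hx)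

lemma exists_adj_card_supp_eq_vertexWeight [Nontrivial V] {T : SimpleGraph V} (hT : T.IsTree)
    (c : V) : ∃ y, T.Adj c y ∧
      Nat.card ((T.deleteEdges {s(c, y)}).connectedComponentMk y).supp = vertexWeight T c := by
  obtain ⟨D, hD⟩ := exists_card_supp_eq_vertexWeight T c
  obtain ⟨y, hcy, hyD⟩ := hT.connected.preconnected.exists_adj_mem_supp D
  refine ⟨y, hcy, le_antisymm ?_ ?_⟩
  · refine card_supp_le_vertexWeight_of_notMem (deleteEdges_le _) _ fun hc ↦ ?_
    rw [ConnectedComponent.mem_supp_iff] at hc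
    exact isAcyclic_iff_forall_adj_isBridge.mp hT.isAcyclic hcy (ConnectedComponent.exact hc)
  · have := D.card_supp_le_card_supp_map _ (induceComplHom_injective (Sym2.mem_mk_left c y))
    rwa [hD, ← (D.mem_supp_iff y).mp hyD, ConnectedComponent.map_mk] at this

end

/-- Some edge incident to a centroid achieves the maximal value of `min θ_T({e})` over all
edges of the tree. -/
theorem stmt14 {V : Type*} [Fintype V] (T : SimpleGraph V) (hT : T.IsTree)
    (hn : 2 ≤ Fintype.card V) :
    ∃ e ∈ T.edgeSet, (∃ c : V, IsCentroid T c ∧ c ∈ e) ∧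
      ∀ f ∈ T.edgeSet,
        sInf {x : ℕ | x ∈ theta T {f}} ≤ sInf {x : ℕ | x ∈ theta T {e}} := by
  have : Nontrivial V := Fintype.one_lt_card_iff_nontrivial.mp hn
  have hconn := hT.connected.preconnected
  obtain ⟨c, hc⟩ : ∃ c, IsCentroid T c := Finite.exists_min (vertexWeight T)
  obtain ⟨y, hcy, hy⟩ := exists_adj_card_supp_eq_vertexWeight hT c
  have hcside : vertexWeight T c ≤
      Nat.card ((T.deleteEdges {s(c, y)}).connectedComponentMk c).supp := by
    have := (hc y).trans (vertexWeight_le_max hconn c y)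
    omega
  refine ⟨s(c, y), hcy, ⟨c, hc, Sym2.mem_mk_left c y⟩, fun f hf ↦ ?_⟩
  rw [sInf_theta_eq_min hconn, hy, min_eq_right hcside]
  exact sInf_theta_le_vertexWeight hT hf c
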